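/- Let m ≥ 1 and let D, S ⊆ {1,…,m} be sets of positive integers with m ∈ D, m ∈ S, and at least one of D, S equal to {1,…,m}. Let G be a finite simple graph, G' a finite simple graph with V(G) ⊆ V(G'), and Blue_0, Red_0 disjoint subsets of V(G') \ V(G) such that: (a) every vertex of V(G') \ (V(G) ∪ Blue_0 ∪ Red_0) is at graph distance at most m in G' from some vertex of Blue_0 and at distance at most m from some vertex of Red_0; (b) every vertex of V(G) is at distance at least m+1 from every vertex of Blue_0 ∪ Red_0; (c) for distinct u, v ∈ V(G), dist_{G'}(u,v) = m if uv is an edge of G, and dist_{G'}(u,v) ≥ m+1 otherwise; (d) any two distinct vertices of Blue_0 ∪ Red_0 are at distance at least m+1. Then the distance game D⟨D,S⟩ on G' starting from the position with blue pieces on Blue_0 and red pieces on Red_0 is play-for-play equivalent to Node-Kayles on G starting from the empty position: in every reachable position the sets of vertices legally playable by Left and by Right coincide and equal the set of unoccupied vertices of V(G) that are not G-adjacent to any occupied vertex of V(G); in particular the player moving first (respectively, second) has a winning strategy in one game if and only if in the other. -/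

import Mathlib

/-!
A vertex of `G` is at distance exactly `m` from the pieces on its `G`-neighbours and at distance
more than `m` from every other piece, so, as `m ∈ D ∩ S` and `D, S ⊆ {1,…,m}`, it is playable
(for either player) exactly when Node-Kayles allows it. Any other free vertex of `G'` lies within
distance `m` of a blue and of a red piece, and whichever of `D`, `S` is all of `{1,…,m}` then
forbids it to both players. So at every position reached the moves of the two games correspond
through the embedding `V(G) ↪ V(G')`, and this correspondence is a relabelling of the game trees.
-/

universe w

namespace SetTheory

/-- Pre-games, as in the older Mathlib's `SetTheory.PGame` (removed from Mathlib since). -/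
inductive PGame : Type (w + 1)
  | mk : ∀ α β : Type w, (α → PGame) → (β → PGame) → PGame

namespace PGame

def LeftMoves : PGame → Type w
  | mk l _ _ _ => l

def RightMoves : PGame → Type w
  | mk _ r _ _ => r

def moveLeft : ∀ g : PGame, LeftMoves g → PGame
  | mk _l _ L _ => L

def moveRight : ∀ g : PGame, RightMoves g → PGame
  | mk _ _r _ R => R

/-- The pair `(x ≤ y, x ⧏ y)`, defined by simultaneous recursion. -/
noncomputable def leLF (x : PGame.{w}) : PGame.{w} → Prop × Prop :=
  PGame.rec (motive := fun _ => PGame.{w} → Prop × Prop)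
    (fun xl xr xL xR IHxl IHxr y =>
      PGame.rec (motive := fun _ => Prop × Prop)
        (fun yl yr yL yR IHyl IHyr =>
          ((∀ i, (IHxl i (mk yl yr yL yR)).2) ∧ ∀ j, (IHyr j).2,
            (∃ i, (IHyl i).1) ∨ ∃ j, (IHxr j (mk yl yr yL yR)).1))
        y)
    x

noncomputable instance : LE PGame.{w} :=
  ⟨fun x y => (leLF x y).1⟩

/-- `x ⧏ y` means `¬ y ≤ x`, as in the older Mathlib. -/
def LF (x y : PGame.{w}) : Prop :=
  ¬y ≤ x

infixl:50 " ⧏ " => PGame.LF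

instance : Zero PGame :=
  ⟨⟨PEmpty, PEmpty, PEmpty.elim, PEmpty.elim⟩⟩

/-- Relabellings, as in the older Mathlib. -/
inductive Relabelling : PGame.{w} → PGame.{w} → Type (w + 1)
  | mk : ∀ {x y : PGame} (L : x.LeftMoves ≃ y.LeftMoves) (R : x.RightMoves ≃ y.RightMoves),
      (∀ i, Relabelling (x.moveLeft i) (y.moveLeft (L i))) →
        (∀ j, Relabelling (x.moveRight j) (y.moveRight (R j))) → Relabelling x y

infixl:50 " ≡r " => PGame.Relabelling

end PGame

end SetTheory

open SimpleGraph SetTheory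

/-- In the distance game `D⟨D,S⟩` on the graph `G`, from the position with blue pieces on
`blue` and red pieces on `red`, Left may legally place a blue piece on the vertex `v`. -/
def LeftMove {W : Type*} (G : SimpleGraph W) (D S : Set ℕ) (blue red : Finset W) (v : W) : Prop :=
  v ∉ blue ∧ v ∉ red ∧ (∀ r ∈ red, ∀ d ∈ D, G.edist v r ≠ (d : ℕ∞)) ∧
    ∀ b ∈ blue, ∀ s ∈ S, G.edist v b ≠ (s : ℕ∞)

/-- Right may legally place a red piece on the vertex `v`. -/
def RightMove {W : Type*} (G : SimpleGraph W) (D S : Set ℕ) (blue red : Finset W) (v : W) : Prop :=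
  v ∉ blue ∧ v ∉ red ∧ (∀ b ∈ blue, ∀ d ∈ D, G.edist v b ≠ (d : ℕ∞)) ∧
    ∀ r ∈ red, ∀ s ∈ S, G.edist v r ≠ (s : ℕ∞)

/-- The distance game `D⟨D,S⟩` on `G` from the position `(blue, red)`, as a combinatorial
game (normal play: a player with no legal move loses). -/
def distGame {W : Type*} [Fintype W] [DecidableEq W] (G : SimpleGraph W) (D S : Set ℕ)
    (blue red : Finset W) : PGame :=
  PGame.mk {v // LeftMove G D S blue red v} {v // RightMove G D S blue red v}
    (fun x => distGame G D S (insert x.1 blue) red)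
    (fun x => distGame G D S blue (insert x.1 red))
termination_by ((blue ∪ red)ᶜ).card
decreasing_by
  · obtain ⟨h1, h2, -, -⟩ := x.2
    calc ((insert x.1 blue ∪ red)ᶜ).card
        = (((blue ∪ red)ᶜ).erase x.1).card := by
          rw [Finset.insert_union, Finset.compl_insert]
      _ < ((blue ∪ red)ᶜ).card :=
          Finset.card_erase_lt_of_mem (Finset.mem_compl.2 (by simp [h1, h2]))
  · obtain ⟨h1, h2, -, -⟩ := x.2
    calc ((blue ∪ insert x.1 red)ᶜ).card
        = (((blue ∪ red)ᶜ).erase x.1).card := by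
          rw [Finset.union_insert, Finset.compl_insert]
      _ < ((blue ∪ red)ᶜ).card :=
          Finset.card_erase_lt_of_mem (Finset.mem_compl.2 (by simp [h1, h2]))

/-- `BiGraph-Node-Kayles` on a bipartite graph `G` with parts `VL`, `VR`, from the position
where `occ` is the set of occupied vertices: players alternately occupy vertices that are
neither equal nor adjacent to a previously occupied vertex, Left occupying only vertices of
`VL` and Right only vertices of `VR`; a player with no legal move loses. -/
def bnkGame {V : Type*} [Fintype V] [DecidableEq V] (G : SimpleGraph V) (VL VR : Finset V)
    (occ : Finset V) : PGame :=
  PGame.mk {v // v ∈ VL ∧ v ∉ occ ∧ ∀ u ∈ occ, ¬G.Adj v u}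
    {v // v ∈ VR ∧ v ∉ occ ∧ ∀ u ∈ occ, ¬G.Adj v u}
    (fun x => bnkGame G VL VR (insert x.1 occ))
    (fun x => bnkGame G VL VR (insert x.1 occ))
termination_by occᶜ.card
decreasing_by
  all_goals
  · obtain ⟨-, h1, -⟩ := x.2
    calc ((insert x.1 occ)ᶜ).card = (occᶜ.erase x.1).card := by rw [Finset.compl_insert]
      _ < occᶜ.card := Finset.card_erase_lt_of_mem (Finset.mem_compl.2 h1)

universe u

namespace SetTheory.PGame

theorem leLF_zero_fst_iff (x : PGame.{w}) : (x.leLF 0).1 ↔ ∀ i, ((x.moveLeft i).leLF 0).2 := by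
  cases x
  exact ⟨fun h => h.1, fun h => ⟨h, fun j => j.elim⟩⟩

theorem leLF_zero_snd_iff (x : PGame.{w}) : (x.leLF 0).2 ↔ ∃ j, ((x.moveRight j).leLF 0).1 := by
  cases x
  exact ⟨fun h => h.elim (fun ⟨i, _⟩ => i.elim) id, Or.inr⟩

theorem zero_leLF_fst_iff (x : PGame.{w}) :
    ((0 : PGame.{w}).leLF x).1 ↔ ∀ j, ((0 : PGame.{w}).leLF (x.moveRight j)).2 := by
  cases x
  exact ⟨fun h => h.2, fun h => ⟨fun i => i.elim, h⟩⟩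

theorem zero_leLF_snd_iff (x : PGame.{w}) :
    ((0 : PGame.{w}).leLF x).2 ↔ ∃ i, ((0 : PGame.{w}).leLF (x.moveLeft i)).1 := by
  cases x
  exact ⟨fun h => h.elim id (fun ⟨j, _⟩ => j.elim), Or.inl⟩

namespace Relabelling

variable {x y : PGame.{w}}

def mk' (L : y.LeftMoves ≃ x.LeftMoves) (R : y.RightMoves ≃ x.RightMoves)
    (hL : ∀ i, x.moveLeft (L i) ≡r y.moveLeft i) (hR : ∀ j, x.moveRight (R j) ≡r y.moveRight j) :
    x ≡r y :=
  mk L.symm R.symm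
    (fun i => by have := hL (L.symm i); rwa [L.apply_symm_apply] at this)
    (fun j => by have := hR (R.symm j); rwa [R.apply_symm_apply] at this)

theorem leLF_zero_iff (r : x ≡r y) :
    ((x.leLF 0).1 ↔ (y.leLF 0).1) ∧ ((x.leLF 0).2 ↔ (y.leLF 0).2) := by
  induction r with
  | mk L R _ _ ihL ihR =>
    rw [leLF_zero_fst_iff, leLF_zero_fst_iff, leLF_zero_snd_iff, leLF_zero_snd_iff]
    exact ⟨L.forall_congr fun i => (ihL i).2, R.exists_congr fun j => (ihR j).1⟩

theorem zero_leLF_iff (r : x ≡r y) :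
    (((0 : PGame.{w}).leLF x).1 ↔ ((0 : PGame.{w}).leLF y).1) ∧
      (((0 : PGame.{w}).leLF x).2 ↔ ((0 : PGame.{w}).leLF y).2) := by
  induction r with
  | mk L R _ _ ihL ihR =>
    rw [zero_leLF_fst_iff, zero_leLF_fst_iff, zero_leLF_snd_iff, zero_leLF_snd_iff]
    exact ⟨R.forall_congr fun j => (ihR j).2, L.exists_congr fun i => (ihL i).1⟩

theorem le_zero_iff (r : x ≡r y) : x ≤ 0 ↔ y ≤ 0 :=
  r.leLF_zero_iff.1

theorem zero_le_iff (r : x ≡r y) : 0 ≤ x ↔ 0 ≤ y :=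
  r.zero_leLF_iff.1

end Relabelling

end SetTheory.PGame

theorem Finset.card_compl_insert_lt {α : Type*} [Fintype α] [DecidableEq α] {s : Finset α} {a : α}
    (h : a ∉ s) : (insert a s)ᶜ.card < sᶜ.card := by
  rw [compl_insert]
  exact card_erase_lt_of_mem (mem_compl.2 h)

noncomputable def Function.Embedding.subtypeEquivOfIff {α β : Type*} (ι : α ↪ β) {p : β → Prop}
    {q : α → Prop} (h : ∀ b, p b ↔ ∃ a, b = ι a ∧ q a) : {a // q a} ≃ {b // p b} :=
  Equiv.ofBijective (fun a => ⟨ι a, (h _).2 ⟨a, rfl, a.2⟩⟩)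
    ⟨fun _ _ hab => Subtype.ext (ι.injective (congrArg Subtype.val hab)), fun ⟨b, hb⟩ =>
      let ⟨a, hba, ha⟩ := (h b).1 hb
      ⟨⟨a, ha⟩, Subtype.ext hba.symm⟩⟩

theorem SimpleGraph.exists_edist_eq_mem_Icc {W : Type*} {G : SimpleGraph W} {u v : W} {m : ℕ}
    (huv : u ≠ v) (hle : G.edist u v ≤ m) : ∃ d ∈ Set.Icc 1 m, G.edist u v = d := by
  obtain ⟨d, hd⟩ := ENat.ne_top_iff_exists.1 (ne_top_of_le_ne_top (ENat.natCast_ne_top m) hle)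
  refine ⟨d, ⟨?_, by exact_mod_cast hd ▸ hle⟩, hd.symm⟩
  exact Nat.one_le_iff_ne_zero.2 fun h0 =>
    huv (edist_eq_zero_iff.1 (by rw [← hd, h0, Nat.cast_zero]))

section DistanceGame

variable {W : Type*} {G : SimpleGraph W} {D S : Set ℕ} {blue red : Finset W} {v : W}

theorem rightMove_iff_leftMove_swap :
    RightMove G D S blue red v ↔ LeftMove G D S red blue v :=
  and_left_comm

theorem leftMove_one_one_iff [DecidableEq W] :
    LeftMove G {1} {1} blue red v ↔ v ∉ blue ∪ red ∧ ∀ u ∈ blue ∪ red, ¬G.Adj v u := by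
  simp only [LeftMove, Set.mem_singleton_iff, forall_eq, Nat.cast_one, ne_eq,
    edist_eq_one_iff_adj, Finset.mem_union, not_or, or_imp, forall_and]
  tauto

theorem rightMove_one_one_iff [DecidableEq W] :
    RightMove G {1} {1} blue red v ↔ v ∉ blue ∪ red ∧ ∀ u ∈ blue ∪ red, ¬G.Adj v u := by
  rw [rightMove_iff_leftMove_swap, leftMove_one_one_iff, Finset.union_comm]

theorem not_leftMove_of_edist_le {m : ℕ} (hfull : D = Set.Icc 1 m ∨ S = Set.Icc 1 m)
    (hblue : ∃ b ∈ blue, G.edist v b ≤ m) (hred : ∃ r ∈ red, G.edist v r ≤ m) :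
    ¬LeftMove G D S blue red v := by
  rintro ⟨hvb, hvr, hD, hS⟩
  rcases hfull with rfl | rfl
  · obtain ⟨r, hr, hle⟩ := hred
    obtain ⟨d, hd, hdist⟩ := exists_edist_eq_mem_Icc (by rintro rfl; exact hvr hr) hle
    exact hD r hr d hd hdist
  · obtain ⟨b, hb, hle⟩ := hblue
    obtain ⟨d, hd, hdist⟩ := exists_edist_eq_mem_Icc (by rintro rfl; exact hvb hb) hle
    exact hS b hb d hd hdist

end DistanceGame

section Embedding

variable {V W : Type*} [DecidableEq W] {G : SimpleGraph V} {G' : SimpleGraph W}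
  {ι : V ↪ W} {m : ℕ} {D S : Set ℕ} {P Q : Finset W}

theorem forall_edist_ne_iff_forall_not_adj {E : Set ℕ} {R : Finset V} {x : V} (hE : E ⊆ Set.Icc 1 m)
    (hmE : m ∈ E) (hfar : ∀ w ∈ Q, (m : ℕ∞) + 1 ≤ G'.edist (ι x) w)
    (hc : ∀ u v : V, u ≠ v →
      (G.Adj u v → G'.edist (ι u) (ι v) = (m : ℕ∞)) ∧
      (¬G.Adj u v → (m : ℕ∞) + 1 ≤ G'.edist (ι u) (ι v))) :
    (∀ r ∈ Q ∪ R.map ι, ∀ d ∈ E, G'.edist (ι x) r ≠ d) ↔ ∀ u ∈ R, ¬G.Adj x u := by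
  refine ⟨fun h u hu hadj => h (ι u) (Finset.mem_union_right _ (Finset.mem_map_of_mem ι hu)) m hmE
    ((hc x u hadj.ne).1 hadj), fun h r hr d hd => ?_⟩
  have hdm : (d : ℕ∞) < m + 1 := by exact_mod_cast Nat.lt_succ_of_le (hE hd).2
  rcases Finset.mem_union.1 hr with hr | hr
  · exact (hdm.trans_le (hfar r hr)).ne'
  obtain ⟨u, hu, rfl⟩ := Finset.mem_map.1 hr
  rcases eq_or_ne x u with rfl | hxu
  · rw [edist_self]
    exact_mod_cast (Nat.one_le_iff_ne_zero.1 (hE hd).1).symm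
  · exact (hdm.trans_le ((hc x u hxu).2 (h u hu))).ne'

theorem leftMove_map_iff [DecidableEq V] {B R : Finset V} {x : V} (hD : D ⊆ Set.Icc 1 m)
    (hS : S ⊆ Set.Icc 1 m) (hmD : m ∈ D) (hmS : m ∈ S) (hxP : ι x ∉ P) (hxQ : ι x ∉ Q)
    (hfar : ∀ w ∈ P ∪ Q, (m : ℕ∞) + 1 ≤ G'.edist (ι x) w)
    (hc : ∀ u v : V, u ≠ v →
      (G.Adj u v → G'.edist (ι u) (ι v) = (m : ℕ∞)) ∧
      (¬G.Adj u v → (m : ℕ∞) + 1 ≤ G'.edist (ι u) (ι v))) :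
    LeftMove G' D S (P ∪ B.map ι) (Q ∪ R.map ι) (ι x) ↔
      x ∉ B ∪ R ∧ ∀ u ∈ B ∪ R, ¬G.Adj x u := by
  rw [LeftMove,
    forall_edist_ne_iff_forall_not_adj hD hmD (fun w hw => hfar w (Finset.mem_union_right _ hw)) hc,
    forall_edist_ne_iff_forall_not_adj hS hmS (fun w hw => hfar w (Finset.mem_union_left _ hw)) hc]
  simp only [Finset.mem_union, Finset.mem_map' ι, hxP, hxQ, false_or, not_or, or_imp, forall_and]
  tauto

theorem leftMove_iff_exists_eq_embedding [DecidableEq V] (hD : D ⊆ Set.Icc 1 m)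
    (hS : S ⊆ Set.Icc 1 m) (hmD : m ∈ D) (hmS : m ∈ S) (hfull : D = Set.Icc 1 m ∨ S = Set.Icc 1 m)
    (hP : ∀ v : V, ι v ∉ P) (hQ : ∀ v : V, ι v ∉ Q)
    (ha : ∀ w : W, (∀ v : V, ι v ≠ w) → w ∉ P → w ∉ Q →
      (∃ b ∈ P, G'.edist w b ≤ (m : ℕ∞)) ∧ (∃ r ∈ Q, G'.edist w r ≤ (m : ℕ∞)))
    (hb : ∀ v : V, ∀ w ∈ P ∪ Q, (m : ℕ∞) + 1 ≤ G'.edist (ι v) w)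
    (hc : ∀ u v : V, u ≠ v →
      (G.Adj u v → G'.edist (ι u) (ι v) = (m : ℕ∞)) ∧
      (¬G.Adj u v → (m : ℕ∞) + 1 ≤ G'.edist (ι u) (ι v)))
    (B R : Finset V) (w : W) :
    LeftMove G' D S (P ∪ B.map ι) (Q ∪ R.map ι) w ↔
      ∃ x : V, w = ι x ∧ x ∉ B ∪ R ∧ ∀ u ∈ B ∪ R, ¬G.Adj x u := by
  by_cases hw : ∃ x, ι x = w
  · obtain ⟨x, rfl⟩ := hw
    rw [leftMove_map_iff hD hS hmD hmS (hP x) (hQ x) (hb x) hc]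
    simp only [ι.injective.eq_iff, exists_eq_left']
  · simp only [not_exists] at hw
    refine iff_of_false (fun h => ?_) fun ⟨x, hx, _⟩ => hw x hx.symm
    obtain ⟨⟨b, hbP, hbw⟩, ⟨r, hrQ, hrw⟩⟩ :=
      ha w hw (h.1 <| Finset.mem_union_left _ ·) (h.2.1 <| Finset.mem_union_left _ ·)
    exact not_leftMove_of_edist_le hfull ⟨b, Finset.mem_union_left _ hbP, hbw⟩
      ⟨r, Finset.mem_union_left _ hrQ, hrw⟩ h

end Embedding

open SetTheory.PGame in
noncomputable def distGameRelabelling {V W : Type u} [Fintype V] [DecidableEq V] [Fintype W]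
    [DecidableEq W] {G : SimpleGraph V} {G' : SimpleGraph W} {D S D₀ S₀ : Set ℕ} (ι : V ↪ W)
    (P Q : Finset W)
    (hmoves : ∀ (B R : Finset V) (w : W),
      (LeftMove G' D S (P ∪ B.map ι) (Q ∪ R.map ι) w ↔ ∃ x, w = ι x ∧ LeftMove G D₀ S₀ B R x) ∧
      (RightMove G' D S (P ∪ B.map ι) (Q ∪ R.map ι) w ↔ ∃ x, w = ι x ∧ RightMove G D₀ S₀ B R x))
    (B R : Finset V) :
    distGame G' D S (P ∪ B.map ι) (Q ∪ R.map ι) ≡r distGame G D₀ S₀ B R := by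
  rw [distGame, distGame]
  refine Relabelling.mk' (ι.subtypeEquivOfIff fun w => (hmoves B R w).1)
    (ι.subtypeEquivOfIff fun w => (hmoves B R w).2) (fun i => ?_) (fun i => ?_)
  · show distGame G' D S (insert (ι i.1) (P ∪ B.map ι)) (Q ∪ R.map ι) ≡r
      distGame G D₀ S₀ (insert i.1 B) R
    rw [← Finset.union_insert, ← Finset.map_insert]
    exact distGameRelabelling ι P Q hmoves (insert i.1 B) R
  · show distGame G' D S (P ∪ B.map ι) (insert (ι i.1) (Q ∪ R.map ι)) ≡r
      distGame G D₀ S₀ B (insert i.1 R)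
    rw [← Finset.union_insert, ← Finset.map_insert]
    exact distGameRelabelling ι P Q hmoves B (insert i.1 R)
termination_by ((B ∪ R)ᶜ).card
decreasing_by
  all_goals obtain ⟨hB, hR, -, -⟩ := i.2
  · rw [Finset.insert_union]
    exact Finset.card_compl_insert_lt (by simp [hB, hR])
  · rw [Finset.union_insert]
    exact Finset.card_compl_insert_lt (by simp [hB, hR])

open SetTheory.PGame in
theorem stmt11_general {V W : Type u} [Fintype V] [DecidableEq V] [Fintype W] [DecidableEq W]
    (m : ℕ) (D S : Set ℕ)
    (hD : D ⊆ Set.Icc 1 m) (hS : S ⊆ Set.Icc 1 m) (hmD : m ∈ D) (hmS : m ∈ S)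
    (hfull : D = Set.Icc 1 m ∨ S = Set.Icc 1 m)
    (G : SimpleGraph V) (G' : SimpleGraph W) (ι : V ↪ W)
    (Blue0 Red0 : Finset W)
    (hB0 : ∀ v : V, ι v ∉ Blue0) (hR0 : ∀ v : V, ι v ∉ Red0)
    -- (a) every extra vertex is within distance `m` of `Blue0` and of `Red0`:
    (ha : ∀ w : W, (∀ v : V, ι v ≠ w) → w ∉ Blue0 → w ∉ Red0 →
      (∃ b ∈ Blue0, G'.edist w b ≤ (m : ℕ∞)) ∧ (∃ r ∈ Red0, G'.edist w r ≤ (m : ℕ∞)))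
    -- (b) every vertex of `V(G)` is at distance at least `m+1` from `Blue0 ∪ Red0`:
    (hb : ∀ v : V, ∀ w ∈ Blue0 ∪ Red0, (m : ℕ∞) + 1 ≤ G'.edist (ι v) w)
    -- (c) distances between vertices of `V(G)`:
    (hc : ∀ u v : V, u ≠ v →
      (G.Adj u v → G'.edist (ι u) (ι v) = (m : ℕ∞)) ∧
      (¬G.Adj u v → (m : ℕ∞) + 1 ≤ G'.edist (ι u) (ι v))) :
    -- in every position of the correspondence, the sets of vertices legally playable by
    -- Left and by Right coincide and equal the set of unoccupied vertices of `V(G)` that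
    -- are not `G`-adjacent to any occupied vertex of `V(G)`:
    (∀ B R : Finset V, Disjoint B R → ∀ w : W,
      (LeftMove G' D S (Blue0 ∪ B.map ι) (Red0 ∪ R.map ι) w ↔
        ∃ x : V, w = ι x ∧ x ∉ B ∪ R ∧ ∀ u ∈ B ∪ R, ¬G.Adj x u) ∧
      (RightMove G' D S (Blue0 ∪ B.map ι) (Red0 ∪ R.map ι) w ↔
        ∃ x : V, w = ι x ∧ x ∉ B ∪ R ∧ ∀ u ∈ B ∪ R, ¬G.Adj x u)) ∧
    -- the two games are play-for-play equivalent: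
    Nonempty (distGame G' D S Blue0 Red0 ≡r
      distGame G {1} ({1} : Set ℕ) (∅ : Finset V) (∅ : Finset V)) ∧
    -- in particular, the player moving first (respectively, second) has a winning strategy
    -- in one game iff in the other:
    ((0 ⧏ distGame G' D S Blue0 Red0 ↔
        0 ⧏ distGame G {1} ({1} : Set ℕ) (∅ : Finset V) (∅ : Finset V)) ∧
      (0 ≤ distGame G' D S Blue0 Red0 ↔
        0 ≤ distGame G {1} ({1} : Set ℕ) (∅ : Finset V) (∅ : Finset V)) ∧
      (distGame G' D S Blue0 Red0 ⧏ 0 ↔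
        distGame G {1} ({1} : Set ℕ) (∅ : Finset V) (∅ : Finset V) ⧏ 0) ∧
      (distGame G' D S Blue0 Red0 ≤ 0 ↔
        distGame G {1} ({1} : Set ℕ) (∅ : Finset V) (∅ : Finset V) ≤ 0)) := by
  have hmoves : ∀ (B R : Finset V) (w : W),
      (LeftMove G' D S (Blue0 ∪ B.map ι) (Red0 ∪ R.map ι) w ↔
        ∃ x : V, w = ι x ∧ x ∉ B ∪ R ∧ ∀ u ∈ B ∪ R, ¬G.Adj x u) ∧
      (RightMove G' D S (Blue0 ∪ B.map ι) (Red0 ∪ R.map ι) w ↔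
        ∃ x : V, w = ι x ∧ x ∉ B ∪ R ∧ ∀ u ∈ B ∪ R, ¬G.Adj x u) := fun B R w => by
    refine ⟨leftMove_iff_exists_eq_embedding hD hS hmD hmS hfull hB0 hR0 ha hb hc B R w, ?_⟩
    rw [rightMove_iff_leftMove_swap, Finset.union_comm B R]
    exact leftMove_iff_exists_eq_embedding hD hS hmD hmS hfull hR0 hB0
      (fun w hw hR hB => (ha w hw hB hR).symm) (fun v w hw => hb v w (by rwa [Finset.union_comm]))
      hc R B w
  have rel := distGameRelabelling (D₀ := {1}) (S₀ := {1}) ι Blue0 Red0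
    (by simpa only [leftMove_one_one_iff, rightMove_one_one_iff] using hmoves) ∅ ∅
  rw [Finset.map_empty, Finset.union_empty, Finset.union_empty] at rel
  exact ⟨fun B R _ => hmoves B R, ⟨rel⟩, not_congr rel.le_zero_iff, rel.zero_le_iff,
    not_congr rel.zero_le_iff, rel.le_zero_iff⟩

open SetTheory.PGame in
/-- for `D, S ⊆ {1,…,m}` with `m ∈ D`, `m ∈ S` and at least one of `D`, `S`
equal to `{1,…,m}`, under hypotheses (a)–(d), the distance game `D⟨D,S⟩` on `G'` starting
from the position with blue pieces on `Blue0` and red pieces on `Red0` is play-for-play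
equivalent to `Node-Kayles = D⟨{1},{1}⟩` on `G` starting from the empty position. -/
theorem stmt11 {V W : Type u} [Fintype V] [DecidableEq V] [Fintype W] [DecidableEq W]
    (m : ℕ) (hm : 1 ≤ m) (D S : Set ℕ)
    (hD : D ⊆ Set.Icc 1 m) (hS : S ⊆ Set.Icc 1 m) (hmD : m ∈ D) (hmS : m ∈ S)
    (hfull : D = Set.Icc 1 m ∨ S = Set.Icc 1 m)
    (G : SimpleGraph V) (G' : SimpleGraph W) (ι : V ↪ W)
    (Blue0 Red0 : Finset W) (hBR : Disjoint Blue0 Red0)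
    (hB0 : ∀ v : V, ι v ∉ Blue0) (hR0 : ∀ v : V, ι v ∉ Red0)
    -- (a) every extra vertex is within distance `m` of `Blue0` and of `Red0`:
    (ha : ∀ w : W, (∀ v : V, ι v ≠ w) → w ∉ Blue0 → w ∉ Red0 →
      (∃ b ∈ Blue0, G'.edist w b ≤ (m : ℕ∞)) ∧ (∃ r ∈ Red0, G'.edist w r ≤ (m : ℕ∞)))
    -- (b) every vertex of `V(G)` is at distance at least `m+1` from `Blue0 ∪ Red0`:
    (hb : ∀ v : V, ∀ w ∈ Blue0 ∪ Red0, (m : ℕ∞) + 1 ≤ G'.edist (ι v) w)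
    -- (c) distances between vertices of `V(G)`:
    (hc : ∀ u v : V, u ≠ v →
      (G.Adj u v → G'.edist (ι u) (ι v) = (m : ℕ∞)) ∧
      (¬G.Adj u v → (m : ℕ∞) + 1 ≤ G'.edist (ι u) (ι v)))
    -- (d) distinct vertices of `Blue0 ∪ Red0` are at distance at least `m+1`:
    (hd : ∀ w₁ ∈ Blue0 ∪ Red0, ∀ w₂ ∈ Blue0 ∪ Red0, w₁ ≠ w₂ →
      (m : ℕ∞) + 1 ≤ G'.edist w₁ w₂) :
    -- in every position of the correspondence, the sets of vertices legally playable by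
    -- Left and by Right coincide and equal the set of unoccupied vertices of `V(G)` that
    -- are not `G`-adjacent to any occupied vertex of `V(G)`:
    (∀ B R : Finset V, Disjoint B R → ∀ w : W,
      (LeftMove G' D S (Blue0 ∪ B.map ι) (Red0 ∪ R.map ι) w ↔
        ∃ x : V, w = ι x ∧ x ∉ B ∪ R ∧ ∀ u ∈ B ∪ R, ¬G.Adj x u) ∧
      (RightMove G' D S (Blue0 ∪ B.map ι) (Red0 ∪ R.map ι) w ↔
        ∃ x : V, w = ι x ∧ x ∉ B ∪ R ∧ ∀ u ∈ B ∪ R, ¬G.Adj x u)) ∧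
    -- the two games are play-for-play equivalent:
    Nonempty (distGame G' D S Blue0 Red0 ≡r
      distGame G {1} ({1} : Set ℕ) (∅ : Finset V) (∅ : Finset V)) ∧
    -- in particular, the player moving first (respectively, second) has a winning strategy
    -- in one game iff in the other:
    ((0 ⧏ distGame G' D S Blue0 Red0 ↔
        0 ⧏ distGame G {1} ({1} : Set ℕ) (∅ : Finset V) (∅ : Finset V)) ∧
      (0 ≤ distGame G' D S Blue0 Red0 ↔
        0 ≤ distGame G {1} ({1} : Set ℕ) (∅ : Finset V) (∅ : Finset V)) ∧
      (distGame G' D S Blue0 Red0 ⧏ 0 ↔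
        distGame G {1} ({1} : Set ℕ) (∅ : Finset V) (∅ : Finset V) ⧏ 0) ∧
      (distGame G' D S Blue0 Red0 ≤ 0 ↔
        distGame G {1} ({1} : Set ℕ) (∅ : Finset V) (∅ : Finset V) ≤ 0)) :=
  stmt11_general m D S hD hS hmD hmS hfull G G' ι Blue0 Red0 hB0 hR0 ha hb hc
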